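/- For any filling T of a k-ribbon tiling of the k-ribbon Fibonacci shape of a word w, vert(T) = (k−1)·(number of letters 2 in w) + Σ (j−1), the sum being over the letters 1_j of w. In particular, vert(T) depends only on the shape w and not on the tiling or the filling, and if P and Q are tableaux of the same shape then vert(P,Q) = 2·vert(P). -/

import Mathlib

namespace KRF

/-- A letter of the alphabet `{1_1, …, 1_k, 2}`:  `one j` stands for the letter `1_j`
(with `1 ≤ j ≤ k` for genuine letters), and `two` stands for the letter `2`. -/
inductive Letter (k : ℕ) : Type where
  | one : ℕ → Letter k
  | two : Letter k
deriving DecidableEq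

/-- A word over the alphabet `{1_1, …, 1_k, 2}`, listed from the leftmost letter to the
rightmost letter. -/
abbrev Word (k : ℕ) := List (Letter k)

/-- The contribution of a letter to the rank: each `1_j` counts `1` and each `2` counts `2`. -/
def Letter.rank {k : ℕ} : Letter k → ℕ
  | .one _ => 1
  | .two => 2

/-- The rank of a word: the sum of its letters. -/
def Word.rank {k : ℕ} (w : Word k) : ℕ := (w.map Letter.rank).sum

/-- The letter `1_j` is valid when `1 ≤ j ≤ k`. -/
def Letter.Valid (k : ℕ) : Letter k → Prop
  | .one j => 1 ≤ j ∧ j ≤ k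
  | .two => True

/-- A genuine word of the Fibonacci poset `Z(k)`: all of its letters are valid. -/
def Word.Valid (k : ℕ) (w : Word k) : Prop := ∀ l ∈ w, l.Valid k

/-- The cover relation of the Fibonacci poset `Z(k)`:  `z` is covered by `w` iff `z` is
obtained from `w` either by changing a `2` into some `1_j` when all letters to the left of
that `2` are `2`'s, or by deleting the leftmost letter of the form `1_j`. -/
def ZCovers (k : ℕ) (z w : Word k) : Prop :=
  (∃ (p s : Word k) (j : ℕ), (∀ l ∈ p, l = Letter.two) ∧ 1 ≤ j ∧ j ≤ k ∧
      w = p ++ Letter.two :: s ∧ z = p ++ Letter.one j :: s) ∨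
  (∃ (p s : Word k) (j : ℕ), (∀ l ∈ p, l = Letter.two) ∧ 1 ≤ j ∧ j ≤ k ∧
      w = p ++ Letter.one j :: s ∧ z = p ++ s)

/-- `c 0 ⋖ c 1 ⋖ ⋯ ⋖ c n` is a saturated chain in `Z(k)` starting at the empty word. -/
def IsZChain (k n : ℕ) (c : ℕ → Word k) : Prop :=
  c 0 = [] ∧ ∀ i, i < n → ZCovers k (c i) (c (i + 1))

end KRF
namespace KRF

/-- A column of a (tiled and filled) `k`-ribbon Fibonacci tableau.
`single h v` is a column of height 1 (shape letter `1_h`) tiled by one `k`-ribbon of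
height `h` filled with the value `v`.
`double ht hb vt vb` is a column of height 2 (shape letter `2`) tiled by a `k`-ribbon of
height `ht` filled with `vt` stacked on top of a `k`-ribbon of height `hb` (always
`hb = k + 1 - ht` for genuine tableaux) filled with `vb`. -/
inductive Col (k : ℕ) : Type where
  | single : ℕ → ℕ → Col k
  | double : ℕ → ℕ → ℕ → ℕ → Col k
deriving DecidableEq

/-- A (tiled, filled) `k`-ribbon Fibonacci tableau: its list of columns, from the leftmost
column to the rightmost one. -/
abbrev Tab (k : ℕ) := List (Col k)

/-- The shape letter of a column. -/
def Col.shape {k : ℕ} : Col k → Letter k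
  | .single h _ => Letter.one h
  | .double _ _ _ _ => Letter.two

/-- The `k`-ribbon Fibonacci shape (a word) underlying a tableau. -/
def Tab.shape {k : ℕ} (T : Tab k) : Word k := T.map Col.shape

/-- The value in the bottom `k`-ribbon of a column. -/
def Col.bottomVal {k : ℕ} : Col k → ℕ
  | .single _ v => v
  | .double _ _ _ vb => vb

/-- The heights occurring in a column are genuine ribbon heights: between `1` and `k`,
and in a column of height 2 the two heights sum to `k + 1`. -/
def Col.HeightsValid (k : ℕ) : Col k → Prop
  | .single h _ => 1 ≤ h ∧ h ≤ k
  | .double ht hb _ _ => 1 ≤ ht ∧ ht ≤ k ∧ hb = k + 1 - ht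

/-- The list of all entries of a tableau (one for each `k`-ribbon). -/
def Tab.entries {k : ℕ} (T : Tab k) : List ℕ :=
  (T.map fun c => match c with
    | Col.single _ v => [v]
    | Col.double _ _ vt vb => [vt, vb]).flatten

/-- The list of the bottom-ribbon values of the columns of a tableau. -/
def Tab.bottoms {k : ℕ} (T : Tab k) : List ℕ := T.map Col.bottomVal

/-- `T` is a standard `k`-ribbon Fibonacci tableau with entries `1, …, n`:
heights are valid, the entries are exactly `1, …, n`,  and the tableau can be built by
placing `n, n-1, …, 1` in order, each new `k`-ribbon being either appended (as a new
rightmost height-1 column) to the shape formed by the `k`-ribbons containing larger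
entries, or stacked on top of a single such `k`-ribbon.  Equivalently (and this is how we
formalize it): the bottom entries strictly decrease from left to right (in particular the
`k`-ribbon containing the leftmost square of the bottom row contains `n`), and in each
column of height 2 the top entry is smaller than the bottom entry. -/
def IsStandardTab (k n : ℕ) (T : Tab k) : Prop :=
  (∀ c ∈ T, Col.HeightsValid k c) ∧
  (Tab.entries T).Perm (List.range' 1 n) ∧
  List.Chain' (fun a b => b < a) (Tab.bottoms T) ∧
  (∀ c ∈ T, ∀ ht hb vt vb, c = Col.double ht hb vt vb → vt < vb)

/-- Updating a (partial) path tableau along one cover step `z ⋖ w` of `Z(k)`, placing the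
value `i` in the `k` new squares of `w` relative to `z`:  if `w` is obtained from `z` by
inserting a letter `1_j` after the prefix of `2`'s, a new height-1 column with a single
ribbon of height `j` filled with `i` is created there; if `w` is obtained from `z` by
changing the letter `1_h` just after the prefix of `2`'s into a `2`, the `k` new squares
of that column form a `k`-ribbon of height `k + 1 - h` filled with `i`, stacked on top of
the already present `k`-ribbon of height `h`. -/
def updateTab (k : ℕ) (i : ℕ) : Word k → Word k → Tab k → Tab k
  | Letter.two :: z', Letter.two :: w', c :: T => c :: updateTab k i z' w' T
  | Letter.one h :: _, Letter.two :: _, Col.single _ v :: T =>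
      Col.double (k + 1 - h) h i v :: T
  | z, Letter.one j :: w', T => if z = w' then Col.single j i :: T else T
  | _, _, T => T

/-- The `k`-ribbon Fibonacci path tableau determined by a saturated chain in `Z(k)`:
for each `i = 1, …, n` the value `i` is placed in the `k` new squares of `c i` relative
to `c (i-1)`. -/
def chainTab (k : ℕ) (c : ℕ → Word k) : ℕ → Tab k
  | 0 => []
  | m + 1 => updateTab k (m + 1) (c m) (c (m + 1)) (chainTab k c m)

/-- `T` is a `k`-ribbon Fibonacci path tableau with entries `1, …, n`: it is obtained
from some saturated chain `∅ = c 0 ⋖ c 1 ⋖ ⋯ ⋖ c n` in `Z(k)` by placing `i`'s in the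
`k` new squares created at the `i`-th step. -/
def IsPathTab (k n : ℕ) (T : Tab k) : Prop :=
  ∃ c : ℕ → Word k, IsZChain k n c ∧ T = chainTab k c n

end KRF
namespace KRF

/-- `vert` of a column: the sum of `(height − 1)` over its `k`-ribbons. -/
def Col.vert {k : ℕ} : Col k → ℕ
  | .single h _ => h - 1
  | .double ht hb _ _ => (ht - 1) + (hb - 1)

/-- `vert(T)`: the sum of `(j − 1)` over all `k`-ribbons of `T`, `j` being the height. -/
def Tab.vert {k : ℕ} (T : Tab k) : ℕ := (T.map Col.vert).sum

/-- The `vert` of every valid column with shape letter `l`: the two ribbons of a column of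
height 2 have heights `h` and `k + 1 - h` for some `h`. -/
def Letter.vert {k : ℕ} : Letter k → ℕ
  | .one j => j - 1
  | .two => k - 1

theorem Col.vert_eq_shape_vert {k : ℕ} {c : Col k} (hc : c.HeightsValid k) :
    c.vert = c.shape.vert := by
  cases c with
  | single => rfl
  | double ht hb =>
    obtain ⟨_, _, rfl⟩ := hc
    simp only [Col.vert, Col.shape, Letter.vert]
    omega

theorem Tab.vert_eq_sum_shape {k : ℕ} {T : Tab k} (hT : ∀ c ∈ T, c.HeightsValid k) :
    T.vert = (T.shape.map Letter.vert).sum := by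
  simp only [Tab.vert, Tab.shape, List.map_map]
  exact congrArg List.sum (List.map_congr_left fun c hc => Col.vert_eq_shape_vert (hT c hc))

theorem Tab.vert_eq_of_shape_eq {k : ℕ} {P Q : Tab k} (hP : ∀ c ∈ P, c.HeightsValid k)
    (hQ : ∀ c ∈ Q, c.HeightsValid k) (h : P.shape = Q.shape) : P.vert = Q.vert := by
  rw [Tab.vert_eq_sum_shape hP, Tab.vert_eq_sum_shape hQ, h]

theorem Word.sum_map_vert {k : ℕ} (w : Word k) :
    (w.map Letter.vert).sum = (k - 1) * (w.count Letter.two) +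
      (w.map fun l => match l with | Letter.one j => j - 1 | Letter.two => 0).sum := by
  induction w with
  | nil => simp
  | cons l w ih =>
    cases l <;> simp [Letter.vert, ih] <;> ring

theorem vert_eq_of_shape_general (k : ℕ) (w : Word k) (T : Tab k)
    (hT : ∀ c ∈ T, Col.HeightsValid k c) (hshape : Tab.shape T = w) :
    (Tab.vert T = (k - 1) * (w.count Letter.two) +
      (w.map fun l => match l with | Letter.one j => j - 1 | Letter.two => 0).sum) ∧
    (∀ P Q : Tab k, (∀ c ∈ P, Col.HeightsValid k c) → (∀ c ∈ Q, Col.HeightsValid k c) →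
      Tab.shape P = Tab.shape Q → Tab.vert P + Tab.vert Q = 2 * Tab.vert P) := by
  refine ⟨?_, fun P Q hP hQ hPQ => ?_⟩
  · rw [Tab.vert_eq_sum_shape hT, hshape, Word.sum_map_vert]
  · rw [Tab.vert_eq_of_shape_eq hQ hP hPQ.symm, two_mul]

/-- For any filling `T` of a `k`-ribbon tiling of the `k`-ribbon
Fibonacci shape of a word `w`,
`vert(T) = (k−1) · (number of letters 2 of w) + Σ (j−1)` (sum over the letters `1_j` of
`w`).  In particular `vert(T)` depends only on the shape `w` and not on the tiling or the
filling, and if `P` and `Q` are tableaux of the same shape then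
`vert(P,Q) = vert(P) + vert(Q) = 2·vert(P)`. -/
theorem vert_eq_of_shape (k : ℕ) (hk : 1 ≤ k) (w : Word k) (T : Tab k)
    (hT : ∀ c ∈ T, Col.HeightsValid k c) (hshape : Tab.shape T = w) :
    (Tab.vert T = (k - 1) * (w.count Letter.two) +
      (w.map fun l => match l with | Letter.one j => j - 1 | Letter.two => 0).sum) ∧
    (∀ P Q : Tab k, (∀ c ∈ P, Col.HeightsValid k c) → (∀ c ∈ Q, Col.HeightsValid k c) →
      Tab.shape P = Tab.shape Q → Tab.vert P + Tab.vert Q = 2 * Tab.vert P) :=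
  vert_eq_of_shape_general k w T hT hshape

end KRF
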